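/- Let (Q_k) be mutually orthogonal finite-rank projections on a separable Hilbert space H with Σ_k Q_k = I strongly, and (α_k) real with |α_k| nondecreasing and |α_k| → ∞. If a ∈ B(H) satisfies Σ_k |α_k| ‖[Q_k,a]‖ < ∞, then [D,a] extends to a bounded (indeed compact) operator, where D = Σ_k α_k Q_k. -/

import Mathlib

open Filter Topology

/-!
The bounded extension of `[D, a]` is the norm-convergent series `∑ₖ αₖ [Qₖ, a]`: its terms
have norms `|αₖ| ‖[Qₖ, a]‖`, and each term is compact because `Qₖ` has finite rank, so the sum
is compact.
On the range of `Qⱼ`, orthogonality of the `Qₖ` leaves only the terms `k = i` and `k = j` of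
`Qᵢ (∑ₖ αₖ [Qₖ, a] x)`, which give `(αᵢ - αⱼ) Qᵢ a x`.
-/

section CompactOperators

variable {𝕜 E F : Type*} [NontriviallyNormedField 𝕜]
  [NormedAddCommGroup E] [NormedSpace 𝕜 E] [NormedAddCommGroup F] [NormedSpace 𝕜 F]

theorem ContinuousLinearMap.isCompactOperator_of_finiteDimensional_range [LocallyCompactSpace 𝕜]
    (f : E →L[𝕜] F) [FiniteDimensional 𝕜 (LinearMap.range (f : E →ₗ[𝕜] F))] :
    IsCompactOperator f := by
  have : ProperSpace (LinearMap.range (f : E →ₗ[𝕜] F)) := FiniteDimensional.proper 𝕜 _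
  exact (isCompactOperator_of_locallyCompactSpace_dom
    (f.codRestrict _ (LinearMap.mem_range_self (f : E →ₗ[𝕜] F)))).continuous_comp
    continuous_subtype_val

theorem HasSum.isCompactOperator {ι : Type*} [CompleteSpace F] {T : ι → E →L[𝕜] F}
    {B : E →L[𝕜] F} (hB : HasSum T B) (hT : ∀ i, IsCompactOperator (T i)) :
    IsCompactOperator B :=
  isCompactOperator_of_tendsto hB <| Eventually.of_forall fun _ =>
    Submodule.sum_mem (compactOperator _ E F) fun i _ => hT i

end CompactOperators

section OrthogonalIdempotents

variable {ι 𝕜 E : Type*} [DecidableEq ι] [NontriviallyNormedField 𝕜]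
  [NormedAddCommGroup E] [NormedSpace 𝕜 E] {Q : ι → E →L[𝕜] E}

theorem apply_apply_eq_ite_of_orthogonal (hidem : ∀ k, IsIdempotentElem (Q k))
    (horth : ∀ i j, i ≠ j → Q i ∘L Q j = 0) (i k : ι) (y : E) :
    Q i (Q k y) = if k = i then Q i y else 0 := by
  split_ifs with hki
  · subst hki
    exact congr($(hidem k) y)
  · exact congr($(horth i k (Ne.symm hki)) y)

/-- For `x` in the range of `Q j`, the `i`-th block of `B x` is what `[D, a] x` would be,
`D` being the (possibly unbounded) operator acting as `c k` on the range of `Q k`. -/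
theorem apply_hasSum_smul_commutator_of_apply_eq (hidem : ∀ k, IsIdempotentElem (Q k))
    (horth : ∀ i j, i ≠ j → Q i ∘L Q j = 0) {c : ι → 𝕜} {a B : E →L[𝕜] E}
    (hB : HasSum (fun k => c k • (Q k ∘L a - a ∘L Q k)) B) {j : ι} {x : E} (hx : Q j x = x)
    (i : ι) : Q i (B x) = (c i - c j) • Q i (a x) := by
  have hQx : ∀ k, Q k x = if k = j then x else 0 := fun k => by
    by_cases hkj : k = j
    · rw [if_pos hkj, hkj, hx]
    · rw [if_neg hkj, ← hx, apply_apply_eq_ite_of_orthogonal hidem horth, if_neg (Ne.symm hkj)]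
  have hblock : HasSum (fun k => Q i (c k • (Q k (a x) - a (Q k x)))) (Q i (B x)) :=
    (Q i).hasSum ((ContinuousLinearMap.apply 𝕜 E x).hasSum hB :)
  have hterms : (fun k => Q i (c k • (Q k (a x) - a (Q k x)))) = fun k =>
      (if k = i then c i • Q i (a x) else 0) - (if k = j then c j • Q i (a x) else 0) := by
    funext k
    rw [map_smul, map_sub, apply_apply_eq_ite_of_orthogonal hidem horth, hQx]
    split_ifs <;> simp_all [smul_sub]
  rw [hterms] at hblock
  rw [hblock.unique ((hasSum_ite_eq i _).sub (hasSum_ite_eq j _)), sub_smul]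

end OrthogonalIdempotents

theorem stmt14_general {H : Type*} [NormedAddCommGroup H] [InnerProductSpace ℂ H]
    [CompleteSpace H]
    (Q : ℕ → H →L[ℂ] H)
    (hproj : ∀ k, IsSelfAdjoint (Q k) ∧ IsIdempotentElem (Q k))
    (hrank : ∀ k, FiniteDimensional ℂ (LinearMap.range (Q k : H →ₗ[ℂ] H)))
    (horth : ∀ i j, i ≠ j → Q i ∘L Q j = 0)
    (α : ℕ → ℝ)
    (a : H →L[ℂ] H)
    (hsummable : Summable fun k => |α k| * ‖Q k ∘L a - a ∘L Q k‖) :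
    ∃ B : H →L[ℂ] H, IsCompactOperator B ∧
      ∀ j (x : H), Q j x = x → ∀ i,
        Q i (B x) = (((α i - α j : ℝ)) : ℂ) • Q i (a x) := by
  set T : ℕ → H →L[ℂ] H := fun k => (α k : ℂ) • (Q k ∘L a - a ∘L Q k)
  have hT : HasSum T (∑' k, T k) := by
    refine (Summable.of_norm ?_).hasSum
    simpa only [T, norm_smul, Complex.norm_real, Real.norm_eq_abs] using hsummable
  refine ⟨_, hT.isCompactOperator fun k => ?_, fun j x hx i => ?_⟩
  · have := hrank k
    have hQ := (Q k).isCompactOperator_of_finiteDimensional_range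
    exact ((hQ.comp_clm a).sub (hQ.clm_comp a)).smul _
  · rw [apply_hasSum_smul_commutator_of_apply_eq (fun k => (hproj k).2) horth hT hx i,
      Complex.ofReal_sub]

/-- For mutually orthogonal finite-rank projections `Q k` summing
strongly to `I`, reals `α k` with `|α k|` nondecreasing to `∞` and `a ∈ B(H)` with
`Σ_k |α_k| ‖[Q_k,a]‖ < ∞`, the commutator `[D,a]` (where `D = Σ α_k Q_k`) extends
to a bounded, indeed compact, operator `B`; the extension property is expressed by
`Q_i (B x) = (α_i - α_j) • Q_i (a x)` for `x` in the range of `Q_j`. -/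
theorem stmt14 {H : Type*} [NormedAddCommGroup H] [InnerProductSpace ℂ H]
    [CompleteSpace H] [TopologicalSpace.SeparableSpace H]
    (Q : ℕ → H →L[ℂ] H)
    (hproj : ∀ k, IsSelfAdjoint (Q k) ∧ IsIdempotentElem (Q k))
    (hrank : ∀ k, FiniteDimensional ℂ (LinearMap.range (Q k : H →ₗ[ℂ] H)))
    (horth : ∀ i j, i ≠ j → Q i ∘L Q j = 0)
    (hsum : ∀ x : H, Tendsto (fun N => ∑ k ∈ Finset.range N, Q k x) atTop (𝓝 x))
    (α : ℕ → ℝ) (hmono : Monotone fun k => |α k|)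
    (hα : Tendsto (fun k => |α k|) atTop atTop)
    (a : H →L[ℂ] H)
    (hsummable : Summable fun k => |α k| * ‖Q k ∘L a - a ∘L Q k‖) :
    ∃ B : H →L[ℂ] H, IsCompactOperator B ∧
      ∀ j (x : H), Q j x = x → ∀ i,
        Q i (B x) = (((α i - α j : ℝ)) : ℂ) • Q i (a x) :=
  stmt14_general Q hproj hrank horth α a hsummable
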